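/- arXiv:2206.01066 — 2 statements merged into one kernel-verified Lean document; each statement's English description precedes it below -/
import Mathlib

section
/- Let $\lambda = (\lambda_1, \dots, \lambda_l)$ be a strict partition (positive distinct integer parts) and define $E_\lambda := \frac{2^{|\lambda|}}{\lambda_1! \cdots \lambda_l!} \prod_{i<j} \frac{\lambda_i - \lambda_j}{\lambda_i + \lambda_j}$, where $|\lambda| = \sum_i \lambda_i$. Then $\frac{E_\lambda}{E_{2\lambda}} = \prod_{i=1}^{l} (2\lambda_i - 1)!!$, where $2\lambda = (2\lambda_1, \dots, 2\lambda_l)$. -/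
/-!
Doubling the parts leaves every factor `(λᵢ - λⱼ)/(λᵢ + λⱼ)` unchanged and doubles `|λ|`,
while `(2n)! = 2ⁿ n! (2n-1)!!` absorbs the extra power of two, so `E_{2λ} = E_λ / ∏ (2λᵢ-1)!!`.
Distinctness of the parts is what keeps `E_λ` nonzero.
-/

/-- The constant `E_λ = 2^{|λ|} / (λ_1! ⋯ λ_l!) ⬝ ∏_{i<j} (λ_i - λ_j)/(λ_i + λ_j)`. -/
def Econst {l : ℕ} (lam : Fin l → ℕ) : ℚ :=
  2 ^ (∑ i, lam i) / ∏ i, ((lam i).factorial : ℚ) *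
    ∏ p ∈ Finset.univ.filter (fun p : Fin l × Fin l => p.1 < p.2),
      (((lam p.1 : ℚ) - lam p.2) / ((lam p.1 : ℚ) + lam p.2))

open Finset Nat

theorem factorial_two_mul_eq_prod_odd (n : ℕ) :
    (2 * n)! = 2 ^ n * n ! * ∏ j ∈ range n, (2 * j + 1) := by
  induction n with
  | zero => simp
  | succ n ih =>
    rw [show 2 * (n + 1) = 2 * n + 1 + 1 by ring, factorial_succ, factorial_succ, ih,
      factorial_succ, prod_range_succ]
    ring

theorem mul_sub_div_mul_add_mul {K : Type*} [Field K] {c : K} (hc : c ≠ 0) (x y : K) :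
    (c * x - c * y) / (c * x + c * y) = (x - y) / (x + y) := by
  rw [← mul_sub, ← mul_add, mul_div_mul_left _ _ hc]

theorem Econst_two_mul {l : ℕ} (lam : Fin l → ℕ) :
    Econst (fun i => 2 * lam i) = Econst lam / ∏ i, ∏ j ∈ range (lam i), (2 * (j : ℚ) + 1) := by
  have hsum : ∑ i, 2 * lam i = 2 * ∑ i, lam i := (mul_sum ..).symm
  have hfact : ∀ i, ((2 * lam i)! : ℚ) =
      2 ^ lam i * ((lam i)! : ℚ) * ∏ j ∈ range (lam i), (2 * (j : ℚ) + 1) := fun i =>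
    mod_cast factorial_two_mul_eq_prod_odd (lam i)
  have hpair : ∏ p ∈ univ.filter (fun p : Fin l × Fin l => p.1 < p.2),
      (((2 * lam p.1 : ℕ) : ℚ) - (2 * lam p.2 : ℕ)) / (((2 * lam p.1 : ℕ) : ℚ) + (2 * lam p.2 : ℕ))
      = ∏ p ∈ univ.filter (fun p : Fin l × Fin l => p.1 < p.2),
      (((lam p.1 : ℚ) - lam p.2) / ((lam p.1 : ℚ) + lam p.2)) :=
    prod_congr rfl fun p _ => by push_cast; exact mul_sub_div_mul_add_mul two_ne_zero _ _
  unfold Econst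
  rw [hsum, hpair]
  simp only [hfact, prod_mul_distrib, prod_pow_eq_pow_sum]
  rw [two_mul, pow_add, mul_assoc, mul_assoc, mul_div_mul_left _ _ (by positivity), div_div]
  ring

theorem Econst_ne_zero {l : ℕ} {lam : Fin l → ℕ} (hlam : Function.Injective lam) :
    Econst lam ≠ 0 := by
  refine div_ne_zero (by positivity) (prod_ne_zero_iff.2 fun i _ => ?_)
  refine mul_ne_zero (mod_cast factorial_ne_zero _) (prod_ne_zero_iff.2 fun p hp => ?_)
  have hne : lam p.1 ≠ lam p.2 := hlam.ne (mem_filter.1 hp).2.ne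
  refine div_ne_zero (sub_ne_zero.2 (mod_cast hne)) ?_
  have hsum_pos : 0 < lam p.1 + lam p.2 := by omega
  exact_mod_cast hsum_pos.ne'

theorem E_ratio_general {l : ℕ} (lam : Fin l → ℕ)
    (hstrict : ∀ i j : Fin l, i < j → lam j < lam i) :
    Econst lam / Econst (fun i => 2 * lam i)
      = ∏ i, ∏ j ∈ Finset.range (lam i), (2 * (j : ℚ) + 1) := by
  have hanti : StrictAnti lam := fun i j h => hstrict i j h
  rw [Econst_two_mul, div_div_cancel₀ (Econst_ne_zero hanti.injective)]

theorem E_ratio {l : ℕ} (lam : Fin l → ℕ) (hpos : ∀ i, 0 < lam i)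
    (hstrict : ∀ i j : Fin l, i < j → lam j < lam i) :
    Econst lam / Econst (fun i => 2 * lam i)
      = ∏ i, ∏ j ∈ Finset.range (lam i), (2 * (j : ℚ) + 1) :=
  E_ratio_general lam hstrict
end

section
/- Define $A_{(a,b)}$ for non-negative integers $a, b$ by: $A_{(3k_1, 3k_2)} = (\tfrac{2}{3})^{k_1+k_2} \frac{1}{k_1! k_2!} \cdot \frac{k_1 - k_2}{k_1 + k_2}$ for $(k_1,k_2) \neq (0,0)$, $A_{(3m+1, 3n+2)} = (\tfrac{2}{3})^{m+n+1} \frac{2}{m! n! (m+n+1)}$, $A_{(3m+2,3n+1)} = -A_{(3n+1,3m+2)}$, and $A_{(a,b)} = 0$ whenever $a + b \not\equiv 0 \pmod 3$. Further define $D A_{(a,b)} := \frac{A_{(a-2,b)}}{a-1} + \frac{A_{(a,b-2)}}{b-1}$ (with terms involving negative entries interpreted via $A_{(a,b)}=0$ if $a<0$ or $b<0$, and defined only when $a,b \neq 1$). Then for all non-negative integers $m, n$, $D A_{(2(3m+2),\, 2(3n+2))} = 0$. -/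
/-! The statement holds for every `D A_{(3p+4, 3q+4)}`; the theorem is the case `p = 2m`, `q = 2n`.
Its two terms are `A_{(3p+2, 3q+4)} / (3p+3)` and `A_{(3p+4, 3q+2)} / (3q+3)`, with residues `(2, 1)`
and `(1, 2)`. By the explicit formula each is `± (2/3)^{p+q+2} ⬝ 2 / (3 (p+1)! (q+1)! (p+q+2))`,
an expression symmetric in `p, q`, and the signs are opposite because
`A_{(3m+2,3n+1)} = -A_{(3n+1,3m+2)}`. -/

/-- The constants `A_{(a,b)} = Q_{(a,b)}(0, 1/3, 0, …)`, given by the explicit formulas: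
`A_{(3k₁,3k₂)} = (2/3)^{k₁+k₂} (1/(k₁! k₂!)) (k₁-k₂)/(k₁+k₂)`,
`A_{(3m+1,3n+2)} = (2/3)^{m+n+1} ⬝ 2/(m! n! (m+n+1))`,
`A_{(3m+2,3n+1)} = -A_{(3n+1,3m+2)}`, and `A_{(a,b)} = 0` when `3 ∤ a+b`. -/
def Apair (a b : ℕ) : ℚ :=
  if (a + b) % 3 ≠ 0 then 0
  else if a % 3 = 0 then
    (2 / 3 : ℚ) ^ (a / 3 + b / 3) * (1 / (((a / 3).factorial : ℚ) * ((b / 3).factorial : ℚ))) *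
      ((((a / 3 : ℕ) : ℚ) - ((b / 3 : ℕ) : ℚ)) / (((a / 3 : ℕ) : ℚ) + ((b / 3 : ℕ) : ℚ)))
  else if a % 3 = 1 then
    (2 / 3 : ℚ) ^ (a / 3 + b / 3 + 1) *
      (2 / (((a / 3).factorial : ℚ) * ((b / 3).factorial : ℚ) * ((a / 3 + b / 3 + 1 : ℕ) : ℚ)))
  else
    -((2 / 3 : ℚ) ^ (b / 3 + a / 3 + 1) *
      (2 / (((b / 3).factorial : ℚ) * ((a / 3).factorial : ℚ) * ((b / 3 + a / 3 + 1 : ℕ) : ℚ))))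

/-- `A` extended by zero to negative integer entries. -/
def Apair' (a b : ℤ) : ℚ := if a < 0 ∨ b < 0 then 0 else Apair a.toNat b.toNat

/-- The operator `D` on length-two `A`'s: `D A_{(a,b)} = A_{(a-2,b)}/(a-1) + A_{(a,b-2)}/(b-1)`. -/
def DApair (a b : ℤ) : ℚ := Apair' (a - 2) b / ((a : ℚ) - 1) + Apair' a (b - 2) / ((b : ℚ) - 1)

theorem Apair_three_mul_add_one_three_mul_add_two (p q : ℕ) :
    Apair (3 * p + 1) (3 * q + 2) =
      (2 / 3 : ℚ) ^ (p + q + 1) * (2 / ((p.factorial : ℚ) * q.factorial * ((p + q + 1 : ℕ) : ℚ))) := by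
  have hdiv_a : (3 * p + 1) / 3 = p := by omega
  have hdiv_b : (3 * q + 2) / 3 = q := by omega
  rw [Apair, if_neg (by omega), if_neg (by omega), if_pos (by omega), hdiv_a, hdiv_b]

theorem Apair_three_mul_add_two_three_mul_add_one (p q : ℕ) :
    Apair (3 * p + 2) (3 * q + 1) = -Apair (3 * q + 1) (3 * p + 2) := by
  have hdiv_a : (3 * p + 2) / 3 = p := by omega
  have hdiv_b : (3 * q + 1) / 3 = q := by omega
  rw [Apair, if_neg (by omega), if_neg (by omega), if_neg (by omega), hdiv_a, hdiv_b,
    Apair_three_mul_add_one_three_mul_add_two]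

theorem Apair'_natCast (a b : ℕ) : Apair' a b = Apair a b := by
  simp [Apair']

theorem Apair_three_mul_add_four_div (p q : ℕ) :
    Apair (3 * (p + 1) + 1) (3 * q + 2) / (3 * q + 3) =
      (2 / 3 : ℚ) ^ (p + q + 2) *
        (2 / (3 * (p + 1).factorial * (q + 1).factorial * ((p + q + 2 : ℕ) : ℚ))) := by
  rw [Apair_three_mul_add_one_three_mul_add_two, Nat.factorial_succ q]
  have hq : (3 * q + 3 : ℚ) ≠ 0 := by positivity
  field_simp
  push_cast
  ring

theorem DApair_three_mul_add_four (p q : ℕ) :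
    DApair (3 * (p : ℤ) + 4) (3 * (q : ℤ) + 4) = 0 := by
  have hcast : ∀ k : ℕ, 3 * (k : ℤ) + 4 - 2 = ((3 * k + 2 : ℕ) : ℤ) := fun k => by push_cast; ring
  have hfour : ∀ k : ℕ, 3 * (k : ℤ) + 4 = ((3 * (k + 1) + 1 : ℕ) : ℤ) := fun k => by push_cast; ring
  have hden : ∀ k : ℕ, (((3 * (k : ℤ) + 4 : ℤ) : ℚ) - 1) = 3 * k + 3 := fun k => by push_cast; ring
  rw [DApair, hden, hden, hcast, hcast, hfour p, hfour q, Apair'_natCast, Apair'_natCast,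
    Apair_three_mul_add_two_three_mul_add_one, neg_div, Apair_three_mul_add_four_div,
    Apair_three_mul_add_four_div, add_comm q p]
  ring

theorem DA_vanishes (m n : ℕ) :
    DApair (2 * (3 * (m : ℤ) + 2)) (2 * (3 * (n : ℤ) + 2)) = 0 := by
  have h := DApair_three_mul_add_four (2 * m) (2 * n)
  push_cast at h
  rwa [show 2 * (3 * (m : ℤ) + 2) = 3 * (2 * m) + 4 by ring,
    show 2 * (3 * (n : ℤ) + 2) = 3 * (2 * n) + 4 by ring]
end
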